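/- Let σ > 0, θ(r) = (σ²/2 + √(σ⁴/4 + 2σ² r))/σ², and let F be a probability distribution on (0,∞) with discount function h_F. Then ∫₀^∞ θ(r) dF(r) = 1 + (1/(√(2π)σ)) ∫₀^∞ t^{-3/2} e^{-(σ²/8) t} (1 - h_F(t)) dt, assuming finiteness of both sides. -/

import Mathlib

open Real MeasureTheory Set Filter Topology

/-! Integrating by parts against `Γ(1/2) = √π` gives `∫₀^∞ t^{-3/2} (1 - e^{-at}) dt = 2√(πa)`,
hence `∫₀^∞ t^{-3/2} e^{-bt} (1 - e^{-rt}) dt = 2√π (√(b + r) - √b)`; for `b = σ²/8` the right-hand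
side is `√(2π) σ (θ(r) - 1)`. Integrating in `r` against `F` and exchanging the two integrals
(Fubini applies since the kernel is nonnegative with iterated integral `∫ (θ - 1) dF < ∞`) turns
`∫ (1 - e^{-rt}) dF(r)` into `1 - h_F(t)`. -/

/-- The positive root `θ(r)` of `(1/2)σ²θ² - (1/2)σ²θ - r = 0`. -/
noncomputable def θfun (σ r : ℝ) : ℝ :=
  (σ^2 / 2 + Real.sqrt (σ^4 / 4 + 2 * σ^2 * r)) / σ^2

/-- The discount function induced by the weighting distribution `F`. -/
noncomputable def discount (F : Measure ℝ) (t : ℝ) : ℝ := ∫ r, Real.exp (-r * t) ∂F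

lemma one_sub_exp_neg_nonneg {x : ℝ} (hx : 0 ≤ x) : 0 ≤ 1 - exp (-x) :=
  sub_nonneg.2 (exp_le_one_iff.2 (neg_nonpos.2 hx))

lemma one_sub_exp_neg_le (x : ℝ) : 1 - exp (-x) ≤ x := by
  linarith [one_sub_le_exp_neg x]

lemma one_sub_exp_neg_le_one (x : ℝ) : 1 - exp (-x) ≤ 1 := by
  linarith [exp_pos (-x)]

section OneSubExpNeg

variable {a : ℝ}

lemma integrableOn_rpow_mul_one_sub_exp_neg (ha : 0 ≤ a) :
    IntegrableOn (fun t : ℝ => t ^ (-(3:ℝ)/2) * (1 - exp (-(a * t)))) (Ioi 0) := by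
  have hmeas : AEStronglyMeasurable (fun t : ℝ => t ^ (-(3:ℝ)/2) * (1 - exp (-(a * t))))
      (volume.restrict (Ioi 0)) := by fun_prop
  have hnorm : ∀ t ∈ Ioi (0:ℝ),
      ‖t ^ (-(3:ℝ)/2) * (1 - exp (-(a * t)))‖ = t ^ (-(3:ℝ)/2) * (1 - exp (-(a * t))) :=
    fun t ht => norm_of_nonneg <|
      mul_nonneg (rpow_nonneg ht.out.le _) (one_sub_exp_neg_nonneg (mul_nonneg ha ht.out.le))
  have near_zero :
      IntegrableOn (fun t : ℝ => t ^ (-(3:ℝ)/2) * (1 - exp (-(a * t)))) (Ioc 0 1) := by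
    have hdom : IntegrableOn (fun t : ℝ => a * t ^ (-(1:ℝ)/2)) (Ioc 0 1) :=
      Integrable.const_mul ((intervalIntegrable_iff_integrableOn_Ioc_of_le zero_le_one).1
        (intervalIntegral.intervalIntegrable_rpow' (by norm_num))) a
    refine hdom.mono' (hmeas.mono_set Ioc_subset_Ioi_self) ?_
    filter_upwards [ae_restrict_mem measurableSet_Ioc] with t ht
    have hpow : t ^ (-(3:ℝ)/2) * t = t ^ (-(1:ℝ)/2) := by
      rw [← rpow_add_one ht.1.ne']; norm_num
    rw [hnorm t ht.1, ← hpow]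
    calc t ^ (-(3:ℝ)/2) * (1 - exp (-(a * t))) ≤ t ^ (-(3:ℝ)/2) * (a * t) :=
          mul_le_mul_of_nonneg_left (one_sub_exp_neg_le _) (rpow_nonneg ht.1.le _)
      _ = a * (t ^ (-(3:ℝ)/2) * t) := by ring
  have near_top :
      IntegrableOn (fun t : ℝ => t ^ (-(3:ℝ)/2) * (1 - exp (-(a * t)))) (Ioi 1) := by
    refine (integrableOn_Ioi_rpow_of_lt (by norm_num : -(3:ℝ)/2 < -1) one_pos).mono'
      (hmeas.mono_set (Ioi_subset_Ioi zero_le_one)) ?_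
    filter_upwards [ae_restrict_mem measurableSet_Ioi] with t ht
    have ht0 : (0:ℝ) < t := one_pos.trans ht
    rw [hnorm t ht0]
    exact mul_le_of_le_one_right (rpow_nonneg ht0.le _) (one_sub_exp_neg_le_one _)
  simpa only [Ioc_union_Ioi_eq_Ioi zero_le_one] using near_zero.union near_top

lemma hasDerivAt_rpow_mul_one_sub_exp_neg {t : ℝ} (ht : 0 < t) :
    HasDerivAt (fun t : ℝ => -2 * t ^ (-(1:ℝ)/2) * (1 - exp (-(a * t))))
      (t ^ (-(3:ℝ)/2) * (1 - exp (-(a * t))) - 2 * a * (t ^ (-(1:ℝ)/2) * exp (-(a * t)))) t := by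
  have hrpow : HasDerivAt (fun t : ℝ => t ^ (-(1:ℝ)/2)) (-(1:ℝ)/2 * t ^ (-(3:ℝ)/2)) t := by
    convert hasDerivAt_rpow_const (p := -(1:ℝ)/2) (Or.inl ht.ne') using 3; norm_num
  have hexp : HasDerivAt (fun t : ℝ => 1 - exp (-(a * t))) (a * exp (-(a * t))) t := by
    simpa [mul_comm] using (((hasDerivAt_id t).const_mul a).neg.exp).const_sub 1
  exact ((hrpow.const_mul (-2)).mul hexp).congr_deriv (by ring)

lemma norm_rpow_mul_one_sub_exp_neg_le {t : ℝ} (ha : 0 ≤ a) (ht : 0 < t) :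
    ‖-2 * t ^ (-(1:ℝ)/2) * (1 - exp (-(a * t)))‖ ≤ 2 * a * t ^ ((1:ℝ)/2) ∧
    ‖-2 * t ^ (-(1:ℝ)/2) * (1 - exp (-(a * t)))‖ ≤ 2 * t ^ (-(1:ℝ)/2) := by
  have h0 := one_sub_exp_neg_nonneg (mul_nonneg ha ht.le)
  have hr := rpow_nonneg ht.le (-(1:ℝ)/2)
  rw [norm_mul, norm_mul, norm_neg, Real.norm_two, norm_of_nonneg hr, norm_of_nonneg h0]
  constructor
  · have hpow : t ^ (-(1:ℝ)/2) * t = t ^ ((1:ℝ)/2) := by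
      rw [← rpow_add_one ht.ne']; norm_num
    rw [← hpow]
    nlinarith [mul_le_mul_of_nonneg_left (one_sub_exp_neg_le (a * t)) hr]
  · nlinarith [mul_le_mul_of_nonneg_left (one_sub_exp_neg_le_one (a * t)) hr]

lemma integral_rpow_mul_one_sub_exp_neg (ha : 0 < a) :
    ∫ t in Ioi (0:ℝ), t ^ (-(3:ℝ)/2) * (1 - exp (-(a * t))) = 2 * sqrt π * sqrt a := by
  set f : ℝ → ℝ := fun t => -2 * t ^ (-(1:ℝ)/2) * (1 - exp (-(a * t)))
  -- `0 ^ (-1/2) = 0` in Lean, and this junk value is the right-hand limit of `f` at `0`.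
  have hf0 : f 0 = 0 := by simp [f]
  have hcont : ContinuousWithinAt f (Ici 0) 0 := by
    rw [ContinuousWithinAt, hf0]
    refine squeeze_zero_norm' (a := fun t => 2 * a * t ^ ((1:ℝ)/2)) ?_ ?_
    · filter_upwards [self_mem_nhdsWithin] with t (ht : 0 ≤ t)
      rcases ht.eq_or_lt with rfl | ht
      · simp [hf0]
      · exact (norm_rpow_mul_one_sub_exp_neg_le ha.le ht).1
    · have := ((continuous_rpow_const (by norm_num : (0:ℝ) ≤ 1/2)).tendsto 0).const_mul (2 * a)
      simpa using this.mono_left nhdsWithin_le_nhds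
  have htop : Tendsto f atTop (𝓝 0) := by
    refine squeeze_zero_norm' (a := fun t => 2 * t ^ (-(1:ℝ)/2)) ?_ ?_
    · filter_upwards [eventually_gt_atTop 0] with t ht
      exact (norm_rpow_mul_one_sub_exp_neg_le ha.le ht).2
    · simpa [neg_div] using (tendsto_rpow_neg_atTop (by norm_num : (0:ℝ) < 1/2)).const_mul 2
  have hgamma_int : IntegrableOn (fun t : ℝ => t ^ (-(1:ℝ)/2) * exp (-(a * t))) (Ioi 0) := by
    simpa using integrableOn_rpow_mul_exp_neg_mul_rpow (p := 1) (by norm_num) one_pos ha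
  have hgamma : ∫ t in Ioi (0:ℝ), t ^ (-(1:ℝ)/2) * exp (-(a * t)) = sqrt π / sqrt a := by
    have := integral_rpow_mul_exp_neg_mul_Ioi (a := 1/2) (by norm_num) ha
    rw [show (1:ℝ)/2 - 1 = -1/2 by norm_num, Gamma_one_half_eq, ← sqrt_eq_rpow, one_div,
      sqrt_inv] at this
    rw [this, div_eq_inv_mul]
  have hftc := integral_Ioi_of_hasDerivAt_of_tendsto hcont
    (fun t ht => hasDerivAt_rpow_mul_one_sub_exp_neg ht)
    ((integrableOn_rpow_mul_one_sub_exp_neg ha.le).sub (hgamma_int.const_mul (2 * a))) htop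
  rw [hf0, sub_zero, integral_sub (integrableOn_rpow_mul_one_sub_exp_neg ha.le)
    (hgamma_int.const_mul _), integral_const_mul, hgamma, sub_eq_zero] at hftc
  rw [hftc]
  field_simp
  rw [sq_sqrt ha.le]

end OneSubExpNeg

section Kernel

variable {b r : ℝ}

lemma rpow_mul_exp_neg_mul_one_sub_exp_neg_eq (t : ℝ) :
    t ^ (-(3:ℝ)/2) * exp (-b * t) * (1 - exp (-r * t)) =
      t ^ (-(3:ℝ)/2) * (1 - exp (-((b + r) * t))) - t ^ (-(3:ℝ)/2) * (1 - exp (-(b * t))) := by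
  rw [show -((b + r) * t) = -b * t + -r * t by ring, exp_add, neg_mul]
  ring

lemma integrableOn_rpow_mul_exp_neg_mul_one_sub_exp_neg (hb : 0 ≤ b) (hr : 0 ≤ r) :
    IntegrableOn (fun t : ℝ => t ^ (-(3:ℝ)/2) * exp (-b * t) * (1 - exp (-r * t))) (Ioi 0) := by
  simp_rw [rpow_mul_exp_neg_mul_one_sub_exp_neg_eq]
  exact (integrableOn_rpow_mul_one_sub_exp_neg (by positivity)).sub
    (integrableOn_rpow_mul_one_sub_exp_neg hb)

lemma integral_rpow_mul_exp_neg_mul_one_sub_exp_neg (hb : 0 < b) (hr : 0 ≤ r) :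
    ∫ t in Ioi (0:ℝ), t ^ (-(3:ℝ)/2) * exp (-b * t) * (1 - exp (-r * t)) =
      2 * sqrt π * (sqrt (b + r) - sqrt b) := by
  simp_rw [rpow_mul_exp_neg_mul_one_sub_exp_neg_eq]
  rw [integral_sub (integrableOn_rpow_mul_one_sub_exp_neg (by positivity))
      (integrableOn_rpow_mul_one_sub_exp_neg hb.le),
    integral_rpow_mul_one_sub_exp_neg (by positivity), integral_rpow_mul_one_sub_exp_neg hb]
  ring

end Kernel

section Discount

variable {F : Measure ℝ} {t : ℝ}

lemma integrable_exp_neg_mul [IsFiniteMeasure F] (hF : ∀ᵐ r ∂F, 0 ≤ r) (ht : 0 ≤ t) :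
    Integrable (fun r => exp (-r * t)) F := by
  refine (integrable_const (1:ℝ)).mono' (by fun_prop) ?_
  filter_upwards [hF] with r hr
  rw [norm_of_nonneg (exp_pos _).le, exp_le_one_iff]
  nlinarith

lemma integral_one_sub_exp_neg_mul [IsProbabilityMeasure F] (hF : ∀ᵐ r ∂F, 0 ≤ r)
    (ht : 0 ≤ t) : ∫ r, (1 - exp (-r * t)) ∂F = 1 - discount F t := by
  rw [integral_sub (integrable_const 1) (integrable_exp_neg_mul hF ht), integral_const, discount]
  simp

theorem setIntegral_rpow_mul_exp_neg_mul_one_sub_discount [IsProbabilityMeasure F]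
    (hF : ∀ᵐ r ∂F, 0 ≤ r) {b : ℝ} (hb : 0 < b)
    (hint : Integrable (fun r => 2 * sqrt π * (sqrt (b + r) - sqrt b)) F) :
    ∫ t in Ioi (0:ℝ), t ^ (-(3:ℝ)/2) * exp (-b * t) * (1 - discount F t) =
      ∫ r, 2 * sqrt π * (sqrt (b + r) - sqrt b) ∂F := by
  set g : ℝ → ℝ → ℝ := fun r t => t ^ (-(3:ℝ)/2) * exp (-b * t) * (1 - exp (-r * t))
  have hg_nonneg : ∀ r, 0 ≤ r → ∀ t ∈ Ioi (0:ℝ), 0 ≤ g r t := fun r hr t ht =>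
    mul_nonneg (mul_nonneg (rpow_nonneg ht.out.le _) (exp_pos _).le)
      (by simpa [neg_mul] using one_sub_exp_neg_nonneg (mul_nonneg hr ht.out.le))
  have hg_int : Integrable (Function.uncurry g) (F.prod (volume.restrict (Ioi 0))) := by
    refine (integrable_prod_iff (by fun_prop)).2 ⟨hF.mono fun r hr =>
      integrableOn_rpow_mul_exp_neg_mul_one_sub_exp_neg hb.le hr, hint.congr ?_⟩
    filter_upwards [hF] with r hr
    rw [← integral_rpow_mul_exp_neg_mul_one_sub_exp_neg hb hr]
    exact setIntegral_congr_fun measurableSet_Ioi fun t ht =>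
      (norm_of_nonneg (hg_nonneg r hr t ht)).symm
  calc ∫ t in Ioi (0:ℝ), t ^ (-(3:ℝ)/2) * exp (-b * t) * (1 - discount F t)
      = ∫ t in Ioi (0:ℝ), ∫ r, g r t ∂F := by
        refine setIntegral_congr_fun measurableSet_Ioi fun t ht => ?_
        rw [← integral_one_sub_exp_neg_mul hF ht.out.le, ← integral_const_mul]
    _ = ∫ r, (∫ t in Ioi (0:ℝ), g r t) ∂F := (integral_integral_swap hg_int).symm
    _ = ∫ r, 2 * sqrt π * (sqrt (b + r) - sqrt b) ∂F :=
        integral_congr_ae (hF.mono fun _ hr => integral_rpow_mul_exp_neg_mul_one_sub_exp_neg hb hr)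

end Discount

lemma sqrt_two_pi_mul_θfun_sub_one {σ : ℝ} (hσ : 0 < σ) (r : ℝ) :
    sqrt (2*π) * σ * (θfun σ r - 1) = 2 * sqrt π * (sqrt (σ^2/8 + r) - sqrt (σ^2/8)) := by
  have hs2 : sqrt 2 ^ 2 = 2 := sq_sqrt zero_le_two
  have h1 : sqrt (σ^4/4 + 2*σ^2*r) = sqrt 2 * σ * sqrt (σ^2/8 + r) := by
    rw [show σ^4/4 + 2*σ^2*r = (sqrt 2 * σ)^2 * (σ^2/8 + r) by rw [mul_pow, hs2]; ring,
      sqrt_mul (sq_nonneg _), sqrt_sq (by positivity)]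
  have h2 : sqrt (σ^2/8) = σ / (2 * sqrt 2) := by
    rw [show σ^2/8 = (σ / (2 * sqrt 2))^2 by rw [div_pow, mul_pow, hs2]; ring,
      sqrt_sq (by positivity)]
  rw [θfun, h1, h2, sqrt_mul zero_le_two]
  field_simp
  rw [hs2]
  ring

theorem stmt11_general (σ : ℝ) (hσ : 0 < σ) (F : Measure ℝ) [IsProbabilityMeasure F]
    (hFc : F (Ioi (0:ℝ))ᶜ = 0)
    (hInt1 : Integrable (θfun σ) F) :
    ∫ r, θfun σ r ∂F =
      1 + (1 / (Real.sqrt (2*π) * σ)) *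
        ∫ t in Ioi (0:ℝ), t ^ (-(3:ℝ)/2) * Real.exp (-(σ^2/8) * t) * (1 - discount F t) := by
  have hF : ∀ᵐ r ∂F, 0 ≤ r :=
    (measure_eq_zero_iff_ae_notMem.1 hFc).mono fun r hr => le_of_lt (by simpa using hr)
  have hθ := funext (sqrt_two_pi_mul_θfun_sub_one hσ)
  have hint : Integrable (fun r => sqrt (2*π) * σ * (θfun σ r - 1)) F :=
    (hInt1.sub (integrable_const 1)).const_mul _
  rw [setIntegral_rpow_mul_exp_neg_mul_one_sub_discount hF (by positivity) (hθ ▸ hint), ← hθ,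
    integral_const_mul, integral_sub hInt1 (integrable_const 1), integral_const]
  have hC : sqrt (2*π) * σ ≠ 0 := by positivity
  field_simp
  simp

theorem stmt11 (σ : ℝ) (hσ : 0 < σ) (F : Measure ℝ) [IsProbabilityMeasure F]
    (hFc : F (Ioi (0:ℝ))ᶜ = 0)
    (hInt1 : Integrable (θfun σ) F)
    (hInt2 : IntegrableOn
      (fun t => t ^ (-(3:ℝ)/2) * Real.exp (-(σ^2/8) * t) * (1 - discount F t)) (Ioi (0:ℝ))) :
    ∫ r, θfun σ r ∂F =
      1 + (1 / (Real.sqrt (2*π) * σ)) *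
        ∫ t in Ioi (0:ℝ), t ^ (-(3:ℝ)/2) * Real.exp (-(σ^2/8) * t) * (1 - discount F t) :=
  stmt11_general σ hσ F hFc hInt1
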